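/- arXiv:1807.10613 — 6 statements merged into one kernel-verified Lean document; each statement's English description precedes it below -/
import Mathlib

section
/- (Gallai–Milgram for undirected graphs) Every undirected graph G admits a path partition into at most α(G) vertex-disjoint paths, where α(G) is the independence number. Hence π_c(G) ≤ π_p(G) ≤ α(G). -/
/-!
Take a path partition with the minimum number of paths. If the first vertices of two of its
paths were adjacent, running backwards along the first path, across that edge and then along the
second would join them into one path, giving a smaller partition. So the first vertices form an
independent set, with one vertex per path.
-/

open SimpleGraph

variable {V : Type*}

/-- A walk is an induced path: it is a path and every adjacency between its
vertices is an edge of the walk. -/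
def IsInducedWalk (G : SimpleGraph V) {u v : V} (p : G.Walk u v) : Prop :=
  p.IsPath ∧ ∀ a ∈ p.support, ∀ b ∈ p.support, G.Adj a b → s(a, b) ∈ p.edges

/-- A walk is an isometric (shortest) path between its endpoints. -/
def IsIsometricWalk (G : SimpleGraph V) {u v : V} (p : G.Walk u v) : Prop :=
  p.IsPath ∧ p.length = G.dist u v

/-- A family of walks is a path cover: each walk is a path and every
vertex lies on at least one of the walks. -/
def IsPathCover (G : SimpleGraph V) {n : ℕ}
    (P : Fin n → Σ u : V, Σ v : V, G.Walk u v) : Prop :=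
  (∀ i, (P i).2.2.IsPath) ∧ ∀ x : V, ∃ i, x ∈ (P i).2.2.support

/-- A family of walks is a path partition: each walk is a path and every
vertex lies on exactly one of the walks. -/
def IsPathPartition (G : SimpleGraph V) {n : ℕ}
    (P : Fin n → Σ u : V, Σ v : V, G.Walk u v) : Prop :=
  (∀ i, (P i).2.2.IsPath) ∧ ∀ x : V, ∃! i, x ∈ (P i).2.2.support

/-- π_c : the path cover number. -/
noncomputable def pathCoverNum (G : SimpleGraph V) : ℕ :=
  sInf {n | ∃ P : Fin n → Σ u : V, Σ v : V, G.Walk u v, IsPathCover G P}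

/-- ρ_c : the induced path cover number. -/
noncomputable def inducedPathCoverNum (G : SimpleGraph V) : ℕ :=
  sInf {n | ∃ P : Fin n → Σ u : V, Σ v : V, G.Walk u v,
    IsPathCover G P ∧ ∀ i, IsInducedWalk G (P i).2.2}

/-- ip_c : the isometric path cover number. -/
noncomputable def isometricPathCoverNum (G : SimpleGraph V) : ℕ :=
  sInf {n | ∃ P : Fin n → Σ u : V, Σ v : V, G.Walk u v,
    IsPathCover G P ∧ ∀ i, IsIsometricWalk G (P i).2.2}

/-- π_p : the path partition number. -/
noncomputable def pathPartitionNum (G : SimpleGraph V) : ℕ :=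
  sInf {n | ∃ P : Fin n → Σ u : V, Σ v : V, G.Walk u v, IsPathPartition G P}

/-- ρ_p : the induced path partition number. -/
noncomputable def inducedPathPartitionNum (G : SimpleGraph V) : ℕ :=
  sInf {n | ∃ P : Fin n → Σ u : V, Σ v : V, G.Walk u v,
    IsPathPartition G P ∧ ∀ i, IsInducedWalk G (P i).2.2}

/-- ip_p : the isometric path partition number. -/
noncomputable def isometricPathPartitionNum (G : SimpleGraph V) : ℕ :=
  sInf {n | ∃ P : Fin n → Σ u : V, Σ v : V, G.Walk u v,
    IsPathPartition G P ∧ ∀ i, IsIsometricWalk G (P i).2.2}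

/-- α : the independence number. -/
noncomputable def indepNumber (G : SimpleGraph V) : ℕ :=
  sSup {n | ∃ s : Finset V, (∀ a ∈ s, ∀ b ∈ s, ¬ G.Adj a b) ∧ s.card = n}

variable {G : SimpleGraph V}

namespace SimpleGraph.Walk

lemma isPath_reverse_append_cons {a b u v : V} {p : G.Walk a u} {q : G.Walk b v}
    (hp : p.IsPath) (hq : q.IsPath) (h : G.Adj a b) (hpq : p.support.Disjoint q.support) :
    (p.reverse.append (cons h q)).IsPath := by
  rw [isPath_def, support_append, support_reverse, support_cons, List.tail_cons]
  exact (List.nodup_reverse.mpr hp.support_nodup).append hq.support_nodup fun x hx hx' =>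
    hpq (List.mem_reverse.mp hx) hx'

end SimpleGraph.Walk

namespace IsPathPartition

variable {n : ℕ} {P : Fin n → Σ u : V, Σ v : V, G.Walk u v}

lemma eq_of_mem_support (hP : IsPathPartition G P) {x : V} {i j : Fin n}
    (hi : x ∈ (P i).2.2.support) (hj : x ∈ (P j).2.2.support) : i = j :=
  (hP.2 x).unique hi hj

lemma mem_support_iff_eq (hP : IsPathPartition G P) {x : V} {i j : Fin n}
    (hj : x ∈ (P j).2.2.support) : x ∈ (P i).2.2.support ↔ i = j :=
  ⟨fun hi => hP.eq_of_mem_support hi hj, by rintro rfl; exact hj⟩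

lemma isPathCover (hP : IsPathPartition G P) : IsPathCover G P :=
  ⟨hP.1, fun x => (hP.2 x).exists⟩

lemma injective_start (hP : IsPathPartition G P) : Function.Injective fun i => (P i).1 :=
  fun i j hij => hP.eq_of_mem_support (Walk.start_mem_support _)
    (by rw [show (P i).1 = (P j).1 from hij]; exact Walk.start_mem_support _)

/-- `W` takes the place of `P i`, and the index `j` is skipped through `j.succAbove`. -/
lemma merge {P : Fin (n + 1) → Σ u : V, Σ v : V, G.Walk u v} (hP : IsPathPartition G P)
    {i j : Fin (n + 1)} (hij : i ≠ j) (W : Σ u : V, Σ v : V, G.Walk u v) (hW : W.2.2.IsPath)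
    (hWs : ∀ x, x ∈ W.2.2.support ↔ x ∈ (P i).2.2.support ∨ x ∈ (P j).2.2.support) :
    IsPathPartition G fun m => Function.update P i W (j.succAbove m) := by
  refine ⟨fun m => ?_, fun x => ?_⟩
  · beta_reduce
    by_cases hm : j.succAbove m = i
    · rw [hm, Function.update_self]; exact hW
    · rw [Function.update_of_ne hm]; exact hP.1 _
  obtain ⟨i₀, hx, -⟩ := hP.2 x
  -- the index of the path through `x` once `P j` has been merged into `P i`
  obtain ⟨i₁, hi₁⟩ : ∃ i₁, i₁ = if i₀ = j then i else i₀ := ⟨_, rfl⟩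
  have hi₁j : i₁ ≠ j := by rw [hi₁]; split_ifs with h <;> assumption
  have key : ∀ l ≠ j, x ∈ (Function.update P i W l).2.2.support ↔ l = i₁ := by
    intro l hlj
    by_cases hli : l = i
    · rw [hli, Function.update_self, hWs, hP.mem_support_iff_eq hx, hP.mem_support_iff_eq hx]
      grind
    · rw [Function.update_of_ne hli, hP.mem_support_iff_eq hx]
      grind
  obtain ⟨z, hz⟩ := Fin.exists_succAbove_eq hi₁j
  exact ⟨z, (key _ (Fin.succAbove_ne _ _)).2 hz, fun m hm =>
    Fin.succAbove_right_injective (((key _ (Fin.succAbove_ne _ _)).1 hm).trans hz.symm)⟩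

lemma exists_card_pred_of_adj (hP : IsPathPartition G P) {i j : Fin n} (hij : i ≠ j)
    (h : G.Adj (P i).1 (P j).1) :
    ∃ Q : Fin (n - 1) → Σ u : V, Σ v : V, G.Walk u v, IsPathPartition G Q := by
  obtain _ | n := n
  · exact i.elim0
  have hdisj : (P i).2.2.support.Disjoint (P j).2.2.support := fun x hi hj =>
    hij (hP.eq_of_mem_support hi hj)
  refine ⟨_, hP.merge hij ⟨_, _, (P i).2.2.reverse.append (.cons h (P j).2.2)⟩
    (Walk.isPath_reverse_append_cons (hP.1 i) (hP.1 j) h hdisj) fun x => ?_⟩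
  simp [Walk.support_append]

end IsPathPartition

lemma exists_isPathPartition_card [Fintype V] (G : SimpleGraph V) :
    ∃ P : Fin (Fintype.card V) → Σ u : V, Σ v : V, G.Walk u v, IsPathPartition G P := by
  let e := (Fintype.equivFin V).symm
  refine ⟨fun i => ⟨e i, e i, .nil⟩, fun _ => .nil, fun x => ⟨e.symm x, by simp, fun y hy => ?_⟩⟩
  obtain rfl : x = e y := by simpa using hy
  simp

lemma IsPathPartition.pathPartitionNum_le {n : ℕ} {P : Fin n → Σ u : V, Σ v : V, G.Walk u v}
    (hP : IsPathPartition G P) : pathPartitionNum G ≤ n :=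
  Nat.sInf_le ⟨P, hP⟩

lemma exists_isPathPartition_pathPartitionNum [Fintype V] (G : SimpleGraph V) :
    ∃ P : Fin (pathPartitionNum G) → Σ u : V, Σ v : V, G.Walk u v, IsPathPartition G P :=
  Nat.sInf_mem (s := {n | ∃ P : Fin n → Σ u : V, Σ v : V, G.Walk u v, IsPathPartition G P})
    ⟨_, exists_isPathPartition_card G⟩

lemma pathCoverNum_le_pathPartitionNum [Fintype V] (G : SimpleGraph V) :
    pathCoverNum G ≤ pathPartitionNum G :=
  have ⟨P, hP⟩ := exists_isPathPartition_pathPartitionNum G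
  Nat.sInf_le ⟨P, hP.isPathCover⟩

lemma card_le_indepNumber [Fintype V] {s : Finset V} (hs : ∀ a ∈ s, ∀ b ∈ s, ¬ G.Adj a b) :
    s.card ≤ indepNumber G :=
  le_csSup ⟨Fintype.card V, by rintro _ ⟨t, -, rfl⟩; exact t.card_le_univ⟩ ⟨s, hs, rfl⟩

lemma pathPartitionNum_le_indepNumber [Fintype V] (G : SimpleGraph V) :
    pathPartitionNum G ≤ indepNumber G := by
  classical
  obtain ⟨P, hP⟩ := exists_isPathPartition_pathPartitionNum G
  have hindep : ∀ a ∈ Finset.univ.image fun i => (P i).1,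
      ∀ b ∈ Finset.univ.image fun i => (P i).1, ¬ G.Adj a b := by
    simp only [Finset.mem_image, Finset.mem_univ, true_and]
    rintro _ ⟨i, rfl⟩ _ ⟨j, rfl⟩ h
    obtain ⟨Q, hQ⟩ := hP.exists_card_pred_of_adj (fun hij => G.irrefl (hij ▸ h)) h
    have := hQ.pathPartitionNum_le
    have := i.pos
    omega
  simpa [Finset.card_image_of_injective _ hP.injective_start] using card_le_indepNumber hindep

theorem stmt_3 {V : Type*} [Fintype V] (G : SimpleGraph V) :
    (∃ n : ℕ, n ≤ indepNumber G ∧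
      ∃ P : Fin n → Σ u : V, Σ v : V, G.Walk u v, IsPathPartition G P) ∧
    pathCoverNum G ≤ pathPartitionNum G ∧ pathPartitionNum G ≤ indepNumber G :=
  ⟨⟨pathPartitionNum G, pathPartitionNum_le_indepNumber G,
      exists_isPathPartition_pathPartitionNum G⟩,
    pathCoverNum_le_pathPartitionNum G, pathPartitionNum_le_indepNumber G⟩
end

section
/- Let G be a connected bipartite graph. Then the isometric path partition number satisfies ip_p(G) ≤ α(G), the independence number of G. -/
open SimpleGraph

variable {V : Type*}

/-! ### Auxiliary material -/

/-- Hall-based matching of the non-`S` vertices of color `i` into `S`,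
where `S` is a maximum independent set. -/
lemma exists_matching_aux [Fintype V] [DecidableEq V] (G : SimpleGraph V)
    (c : G.Coloring (Fin 2)) (S : Finset V)
    (hS : ∀ a ∈ S, ∀ b ∈ S, ¬ G.Adj a b)
    (hmax : ∀ s : Finset V, (∀ a ∈ s, ∀ b ∈ s, ¬ G.Adj a b) → s.card ≤ S.card)
    (i : Fin 2) :
    ∃ F : V → V,
      (∀ x ∈ Sᶜ.filter (fun v => c v = i),
        G.Adj x (F x) ∧ F x ∈ S.filter (fun v => c v ≠ i)) ∧
      Set.InjOn F (Sᶜ.filter (fun v => c v = i) : Finset V) := by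
  classical
  set CA := Sᶜ.filter (fun v => c v = i) with hCA
  set SB := S.filter (fun v => c v ≠ i) with hSB
  haveI : DecidableRel G.Adj := Classical.decRel _
  set t : {x // x ∈ CA} → Finset V := fun x => G.neighborFinset x.1 ∩ SB with ht
  have hall : ∀ T : Finset {x // x ∈ CA}, T.card ≤ (T.biUnion t).card := by
    intro T
    by_contra hlt
    push_neg at hlt
    set N := T.biUnion t with hN
    set T' := T.image Subtype.val with hT'
    have hT'card : T'.card = T.card := by
      rw [hT']; exact Finset.card_image_of_injective _ Subtype.coe_injective
    have hNS : N ⊆ S := by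
      intro v hv
      rw [hN, Finset.mem_biUnion] at hv
      obtain ⟨x, -, hv⟩ := hv
      have := (Finset.mem_inter.mp hv).2
      rw [hSB, Finset.mem_filter] at this
      exact this.1
    have hT'C : ∀ a ∈ T', a ∉ S := by
      intro a ha
      rw [hT', Finset.mem_image] at ha
      obtain ⟨x, -, rfl⟩ := ha
      have hx : (x : V) ∈ Sᶜ.filter (fun v => c v = i) := x.2
      rw [Finset.mem_filter, Finset.mem_compl] at hx
      exact hx.1
    have hT'col : ∀ a ∈ T', c a = i := by
      intro a ha
      rw [hT', Finset.mem_image] at ha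
      obtain ⟨x, -, rfl⟩ := ha
      have hx : (x : V) ∈ Sᶜ.filter (fun v => c v = i) := x.2
      rw [Finset.mem_filter] at hx
      exact hx.2
    -- the key swap argument
    have key : ∀ a ∈ T', ∀ b ∈ S \ N, ¬ G.Adj a b := by
      intro a haT b hbS hab
      have hcolA := hT'col a haT
      rw [Finset.mem_sdiff] at hbS
      rw [hT', Finset.mem_image] at haT
      obtain ⟨x, hxT, rfl⟩ := haT
      apply hbS.2
      rw [hN, Finset.mem_biUnion]
      refine ⟨x, hxT, ?_⟩
      rw [ht]
      rw [Finset.mem_inter, mem_neighborFinset]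
      refine ⟨hab, ?_⟩
      rw [hSB, Finset.mem_filter]
      refine ⟨hbS.1, ?_⟩
      have hcol := c.valid hab
      intro hcb
      exact hcol (by rw [hcolA, hcb])
    have hS'ind : ∀ a ∈ (S \ N) ∪ T', ∀ b ∈ (S \ N) ∪ T', ¬ G.Adj a b := by
      intro a ha b hb hab
      rw [Finset.mem_union] at ha hb
      rcases ha with ha | ha <;> rcases hb with hb | hb
      · exact hS a (Finset.mem_sdiff.mp ha).1 b (Finset.mem_sdiff.mp hb).1 hab
      · exact key b hb a ha hab.symm
      · exact key a ha b hb hab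
      · exact c.valid hab (by rw [hT'col a ha, hT'col b hb])
    have hdisj : Disjoint (S \ N) T' := by
      rw [Finset.disjoint_right]
      intro a ha
      rw [Finset.mem_sdiff]
      exact fun h => hT'C a ha h.1
    have hcard : ((S \ N) ∪ T').card = S.card - N.card + T.card := by
      rw [Finset.card_union_of_disjoint hdisj, Finset.card_sdiff_of_subset hNS, hT'card]
    have hle := hmax _ hS'ind
    have hNcard : N.card ≤ S.card := Finset.card_le_card hNS
    omega
  obtain ⟨f, hfinj, hf⟩ := (Finset.all_card_le_biUnion_card_iff_exists_injective t).mp hall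
  refine ⟨fun v => if h : v ∈ CA then f ⟨v, h⟩ else v, ?_, ?_⟩
  · intro x hx
    simp only [dif_pos hx]
    have := hf ⟨x, hx⟩
    rw [ht, Finset.mem_inter, mem_neighborFinset] at this
    exact this
  · intro a ha b hb hab
    rw [Finset.mem_coe] at ha hb
    simp only [dif_pos ha, dif_pos hb] at hab
    exact congrArg Subtype.val (hfinj hab)

open Classical in
/-- The walk assigned to a vertex `s` of the independent set: an edge to `s`
from its matched partner if `s` is matched, otherwise the trivial walk. -/
noncomputable def pathOf (G : SimpleGraph V) (CA CB : Finset V) (F0 F1 : V → V) (s : V) :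
    Σ u : V, Σ v : V, G.Walk u v :=
  if h : ∃ x, x ∈ CA ∧ F0 x = s ∧ G.Adj x s then
    ⟨h.choose, s, Walk.cons h.choose_spec.2.2 Walk.nil⟩
  else if h' : ∃ x, x ∈ CB ∧ F1 x = s ∧ G.Adj x s then
    ⟨h'.choose, s, Walk.cons h'.choose_spec.2.2 Walk.nil⟩
  else ⟨s, s, Walk.nil⟩

lemma pathOf_isometric (G : SimpleGraph V) (CA CB : Finset V) (F0 F1 : V → V) (s : V) :
    IsIsometricWalk G (pathOf G CA CB F0 F1 s).2.2 := by
  by_cases h : ∃ x, x ∈ CA ∧ F0 x = s ∧ G.Adj x s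
  · rw [pathOf, dif_pos h]
    refine ⟨by simp [h.choose_spec.2.2.ne], ?_⟩
    simpa using (dist_eq_one_iff_adj.2 h.choose_spec.2.2).symm
  by_cases h' : ∃ x, x ∈ CB ∧ F1 x = s ∧ G.Adj x s
  · rw [pathOf, dif_neg h, dif_pos h']
    refine ⟨by simp [h'.choose_spec.2.2.ne], ?_⟩
    simpa using (dist_eq_one_iff_adj.2 h'.choose_spec.2.2).symm
  · rw [pathOf, dif_neg h, dif_neg h']
    exact ⟨Walk.IsPath.nil, by simp [SimpleGraph.dist_self]⟩

lemma s_mem_pathOf (G : SimpleGraph V) (CA CB : Finset V) (F0 F1 : V → V) (s : V) :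
    s ∈ (pathOf G CA CB F0 F1 s).2.2.support := by
  by_cases h : ∃ x, x ∈ CA ∧ F0 x = s ∧ G.Adj x s
  · rw [pathOf, dif_pos h]; simp
  by_cases h' : ∃ x, x ∈ CB ∧ F1 x = s ∧ G.Adj x s
  · rw [pathOf, dif_neg h, dif_pos h']; simp
  · rw [pathOf, dif_neg h, dif_neg h']; simp

lemma mem_pathOf_cases (G : SimpleGraph V) (CA CB : Finset V) (F0 F1 : V → V) {s x : V}
    (hx : x ∈ (pathOf G CA CB F0 F1 s).2.2.support) :
    x = s ∨ (x ∈ CA ∧ F0 x = s) ∨ (x ∈ CB ∧ F1 x = s) := by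
  by_cases h : ∃ y, y ∈ CA ∧ F0 y = s ∧ G.Adj y s
  · rw [pathOf, dif_pos h] at hx
    simp only [Walk.support_cons, Walk.support_nil, List.mem_cons,
      List.not_mem_nil, or_false] at hx
    rcases hx with rfl | rfl
    · exact Or.inr (Or.inl ⟨h.choose_spec.1, h.choose_spec.2.1⟩)
    · exact Or.inl rfl
  by_cases h' : ∃ y, y ∈ CB ∧ F1 y = s ∧ G.Adj y s
  · rw [pathOf, dif_neg h, dif_pos h'] at hx
    simp only [Walk.support_cons, Walk.support_nil, List.mem_cons,
      List.not_mem_nil, or_false] at hx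
    rcases hx with rfl | rfl
    · exact Or.inr (Or.inr ⟨h'.choose_spec.1, h'.choose_spec.2.1⟩)
    · exact Or.inl rfl
  · rw [pathOf, dif_neg h, dif_neg h'] at hx
    simp only [Walk.support_nil, List.mem_cons, List.not_mem_nil, or_false] at hx
    exact Or.inl hx

lemma mem_pathOf_CA (G : SimpleGraph V) (CA CB : Finset V) (F0 F1 : V → V) {s x : V}
    (hinj : Set.InjOn F0 (CA : Set V)) (hx : x ∈ CA) (hs : F0 x = s) (hadj : G.Adj x s) :
    x ∈ (pathOf G CA CB F0 F1 s).2.2.support := by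
  have h : ∃ y, y ∈ CA ∧ F0 y = s ∧ G.Adj y s := ⟨x, hx, hs, hadj⟩
  rw [pathOf, dif_pos h]
  have hc : h.choose = x :=
    hinj (Finset.mem_coe.mpr h.choose_spec.1) (Finset.mem_coe.mpr hx)
      (by rw [h.choose_spec.2.1, hs])
  simp [hc]

lemma mem_pathOf_CB (G : SimpleGraph V) (CA CB : Finset V) (F0 F1 : V → V) {s x : V}
    (hinj : Set.InjOn F1 (CB : Set V)) (hno : ∀ y ∈ CA, F0 y ≠ s)
    (hx : x ∈ CB) (hs : F1 x = s) (hadj : G.Adj x s) :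
    x ∈ (pathOf G CA CB F0 F1 s).2.2.support := by
  have hneg : ¬ ∃ y, y ∈ CA ∧ F0 y = s ∧ G.Adj y s := by
    rintro ⟨y, hy, h1, -⟩; exact hno y hy h1
  have h : ∃ y, y ∈ CB ∧ F1 y = s ∧ G.Adj y s := ⟨x, hx, hs, hadj⟩
  rw [pathOf, dif_neg hneg, dif_pos h]
  have hc : h.choose = x :=
    hinj (Finset.mem_coe.mpr h.choose_spec.1) (Finset.mem_coe.mpr hx)
      (by rw [h.choose_spec.2.1, hs])
  simp [hc]

theorem stmt_7 {V : Type*} [Fintype V] (G : SimpleGraph V)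
    (hconn : G.Connected) (hbip : G.Colorable 2) :
    isometricPathPartitionNum G ≤ indepNumber G := by
  classical
  obtain ⟨c⟩ := hbip
  -- a maximum independent set S with S.card = indepNumber G
  have hne : ({n | ∃ s : Finset V, (∀ a ∈ s, ∀ b ∈ s, ¬ G.Adj a b) ∧ s.card = n} : Set ℕ).Nonempty :=
    ⟨0, ∅, by simp, by simp⟩
  have hbdd : BddAbove {n | ∃ s : Finset V, (∀ a ∈ s, ∀ b ∈ s, ¬ G.Adj a b) ∧ s.card = n} := by
    refine ⟨Fintype.card V, ?_⟩
    rintro n ⟨s, -, rfl⟩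
    exact Finset.card_le_univ s
  have hmem : indepNumber G ∈ {n | ∃ s : Finset V, (∀ a ∈ s, ∀ b ∈ s, ¬ G.Adj a b) ∧ s.card = n} :=
    Nat.sSup_mem hne hbdd
  obtain ⟨S, hSind, hScard⟩ := hmem
  have hmax : ∀ s : Finset V, (∀ a ∈ s, ∀ b ∈ s, ¬ G.Adj a b) → s.card ≤ S.card := by
    intro s hs
    rw [hScard]
    exact le_csSup hbdd ⟨s, hs, rfl⟩
  obtain ⟨F0, hF0, hF0inj⟩ := exists_matching_aux G c S hSind hmax 0
  obtain ⟨F1, hF1, hF1inj⟩ := exists_matching_aux G c S hSind hmax 1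
  set CA := Sᶜ.filter (fun v => c v = 0) with hCA
  set CB := Sᶜ.filter (fun v => c v = 1) with hCB
  -- basic membership facts
  have hCAS : ∀ x ∈ CA, x ∉ S := by
    intro x hx; rw [hCA, Finset.mem_filter, Finset.mem_compl] at hx; exact hx.1
  have hCBS : ∀ x ∈ CB, x ∉ S := by
    intro x hx; rw [hCB, Finset.mem_filter, Finset.mem_compl] at hx; exact hx.1
  have hCAc : ∀ x ∈ CA, c x = 0 := fun x hx => (Finset.mem_filter.mp hx).2
  have hCBc : ∀ x ∈ CB, c x = 1 := fun x hx => (Finset.mem_filter.mp hx).2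
  have hcover : ∀ x : V, x ∈ S ∨ x ∈ CA ∨ x ∈ CB := by
    intro x
    by_cases hxS : x ∈ S
    · exact Or.inl hxS
    · have hlt := (c x).is_lt
      rcases (by omega : (c x : Fin 2).val = 0 ∨ (c x).val = 1) with h | h
      · exact Or.inr (Or.inl (Finset.mem_filter.mpr ⟨Finset.mem_compl.mpr hxS, Fin.ext h⟩))
      · exact Or.inr (Or.inr (Finset.mem_filter.mpr ⟨Finset.mem_compl.mpr hxS, Fin.ext h⟩))
  have hF0S : ∀ x ∈ CA, F0 x ∈ S ∧ c (F0 x) ≠ 0 := by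
    intro x hx
    have := (hF0 x hx).2
    rw [Finset.mem_filter] at this
    exact this
  have hF1S : ∀ x ∈ CB, F1 x ∈ S ∧ c (F1 x) ≠ 1 := by
    intro x hx
    have := (hF1 x hx).2
    rw [Finset.mem_filter] at this
    exact this
  -- disjointness of the ranges: needed to refute the first branch for CB vertices
  have hno : ∀ x ∈ CB, ∀ y ∈ CA, F0 y ≠ F1 x := by
    intro x hx y hy heq
    have h0 := (hF0S y hy).2
    have h1 := (hF1S x hx).2
    rw [heq] at h0
    have hv0 : ((c (F1 x)) : Fin 2).val ≠ 0 := fun h => h0 (Fin.ext h)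
    have hv1 : ((c (F1 x)) : Fin 2).val ≠ 1 := fun h => h1 (Fin.ext h)
    have hlt := (c (F1 x)).is_lt
    omega
  -- the partition indexed by S
  set e : {a // a ∈ S} ≃ Fin S.card := Fintype.equivFinOfCardEq (Fintype.card_coe S) with he
  set P : Fin S.card → Σ u : V, Σ v : V, G.Walk u v :=
    fun i => pathOf G CA CB F0 F1 ((e.symm i : {a // a ∈ S}) : V) with hP
  have hiso : ∀ i, IsIsometricWalk G (P i).2.2 := fun i => pathOf_isometric G CA CB F0 F1 _
  -- the unique-membership property, phrased over S
  have huniq : ∀ x : V, ∃! s : {a // a ∈ S}, x ∈ (pathOf G CA CB F0 F1 (s : V)).2.2.support := by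
    intro x
    rcases hcover x with hxS | hxA | hxB
    · refine ⟨⟨x, hxS⟩, s_mem_pathOf G CA CB F0 F1 x, ?_⟩
      rintro ⟨s, hsS⟩ hsup
      rcases mem_pathOf_cases G CA CB F0 F1 hsup with h | ⟨hxCA, -⟩ | ⟨hxCB, -⟩
      · exact Subtype.ext h.symm
      · exact absurd hxS (hCAS x hxCA)
      · exact absurd hxS (hCBS x hxCB)
    · refine ⟨⟨F0 x, (hF0S x hxA).1⟩,
        mem_pathOf_CA G CA CB F0 F1 hF0inj hxA rfl (hF0 x hxA).1, ?_⟩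
      rintro ⟨s, hsS⟩ hsup
      rcases mem_pathOf_cases G CA CB F0 F1 hsup with h | ⟨-, h⟩ | ⟨hxCB, -⟩
      · exact absurd (h ▸ hsS) (hCAS x hxA)
      · exact Subtype.ext h.symm
      · have h0 := hCAc x hxA
        have h1 := hCBc x hxCB
        rw [h0] at h1
        exact absurd h1 (by decide)
    · refine ⟨⟨F1 x, (hF1S x hxB).1⟩,
        mem_pathOf_CB G CA CB F0 F1 hF1inj (fun y hy => hno x hxB y hy) hxB rfl
          (hF1 x hxB).1, ?_⟩
      rintro ⟨s, hsS⟩ hsup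
      rcases mem_pathOf_cases G CA CB F0 F1 hsup with h | ⟨hxCA, -⟩ | ⟨-, h⟩
      · exact absurd (h ▸ hsS) (hCBS x hxB)
      · have h0 := hCAc x hxCA
        have h1 := hCBc x hxB
        rw [h0] at h1
        exact absurd h1 (by decide)
      · exact Subtype.ext h.symm
  have hpart : IsPathPartition G P := by
    refine ⟨fun i => (hiso i).1, ?_⟩
    intro x
    obtain ⟨s, hsup, hun⟩ := huniq x
    refine ⟨e s, ?_, ?_⟩
    · show x ∈ (pathOf G CA CB F0 F1 ((e.symm (e s) : {a // a ∈ S}) : V)).2.2.support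
      rw [Equiv.symm_apply_apply]
      exact hsup
    · intro i hi
      have hi' : x ∈ (pathOf G CA CB F0 F1 ((e.symm i : {a // a ∈ S}) : V)).2.2.support := hi
      have hse := hun (e.symm i) hi'
      rw [← hse, Equiv.apply_symm_apply]
  have hmem2 : S.card ∈ {n | ∃ P : Fin n → Σ u : V, Σ v : V, G.Walk u v,
      IsPathPartition G P ∧ ∀ i, IsIsometricWalk G (P i).2.2} := ⟨P, hpart, hiso⟩
  calc isometricPathPartitionNum G ≤ S.card := Nat.sInf_le hmem2
    _ = indepNumber G := hScard
end

section
/- The isometric path cover number of a tree with ℓ leaves is ⌈ℓ/2⌉. -/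
open SimpleGraph

variable {V : Type*}

/-!
Every leaf lying on a path is one of its endpoints, so a cover by `k` paths has at most `2k`
leaves. Conversely, root the tree at a leaf `r` and list the `ℓ` leaves in depth-first order,
i.e. ordered by the lexicographic order of their paths from `r`. For every vertex `v ≠ r` the
leaves below `v` form a block of consecutive leaves that does not contain `r`, and the path
between a leaf inside the block and one outside it passes through `v`. Joining the `j`-th leaf
to the `(j + ⌈ℓ/2⌉)`-th one, for `j < ⌈ℓ/2⌉`, separates every such block, and in a tree every
path is isometric.
-/

open Finset

theorem List.IsPrefix.of_le_of_le {α : Type*} [LinearOrder α] {l a b c : List α}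
    (ha : l <+: a) (hb : l <+: b) (hac : a ≤ c) (hcb : c ≤ b) : l <+: c := by
  rw [← not_lt] at hac hcb
  induction l generalizing a b c with
  | nil => exact List.nil_prefix
  | cons x l ih =>
    obtain ⟨ta, rfl⟩ := ha
    obtain ⟨tb, rfl⟩ := hb
    cases c with
    | nil => exact absurd List.Lex.nil hac
    | cons y c =>
      rcases lt_trichotomy y x with h | rfl | h
      · exact absurd (List.Lex.rel h) hac
      · exact (List.prefix_cons_inj _).mpr <|
          ih (List.prefix_append _ ta) (List.prefix_append _ tb) (hac ·.cons) (hcb ·.cons)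
      · exact absurd (List.Lex.rel h) hcb

/-- For odd `ℓ` the index `⌈ℓ/2⌉ - 1` has no partner `⌈ℓ/2⌉` further on and is paired with the
last index `ℓ - 1` instead. -/
def pairedIndex (ℓ j : ℕ) : ℕ := min (j + (ℓ + 1) / 2) (ℓ - 1)

theorem exists_eq_or_eq_pairedIndex {ℓ i : ℕ} (hi : i < ℓ) :
    ∃ j < (ℓ + 1) / 2, i = j ∨ i = pairedIndex ℓ j := by
  by_cases h : i < (ℓ + 1) / 2
  · exact ⟨i, h, .inl rfl⟩
  · exact ⟨i - (ℓ + 1) / 2, by omega, .inr (by unfold pairedIndex; omega)⟩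

theorem exists_pairedIndex_separating {ℓ a b : ℕ} (hab : a ≤ b) (hb : b < ℓ)
    (hproper : 0 < a ∨ b + 1 < ℓ) :
    ∃ j < (ℓ + 1) / 2, (a ≤ j ∧ j ≤ b ↔ ¬(a ≤ pairedIndex ℓ j ∧ pairedIndex ℓ j ≤ b)) := by
  unfold pairedIndex
  by_cases h₁ : b < (ℓ + 1) / 2
  · exact ⟨a, by omega, by omega⟩
  by_cases h₂ : (ℓ + 1) / 2 ≤ a
  · exact ⟨a - (ℓ + 1) / 2, by omega, by omega⟩
  rcases Nat.eq_zero_or_pos a with h₃ | h₃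
  · exact ⟨b + 1 - (ℓ + 1) / 2, by omega, by omega⟩
  · exact ⟨0, by omega, by omega⟩

theorem Finset.exists_enum_monotone {α β : Type*} [Nonempty α] [LinearOrder β] (s : Finset α)
    {f : α → β} (hf : Function.Injective f) :
    ∃ e : ℕ → α, (∀ a ∈ s, ∃ j < #s, e j = a) ∧ ∀ i j, i ≤ j → j < #s → f (e i) ≤ f (e j) := by
  let : LinearOrder α := LinearOrder.lift' f hf
  set g := s.orderEmbOfFin rfl
  refine ⟨fun j => if h : j < #s then g ⟨j, h⟩ else Classical.arbitrary α,
    fun a ha => ?_, fun i j hij hj => ?_⟩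
  · obtain ⟨⟨j, hj⟩, rfl⟩ : a ∈ Set.range g := by rwa [range_orderEmbOfFin]
    exact ⟨j, hj, by simp [hj]⟩
  · simp only [dif_pos hj, dif_pos (hij.trans_lt hj)]
    exact g.monotone (Fin.mk_le_mk.mpr hij)

theorem SimpleGraph.Walk.IsPath.eq_or_eq_of_degree_eq_one {G : SimpleGraph V} {x : V}
    [Fintype (G.neighborSet x)] (hx : G.degree x = 1) {u v : V} {p : G.Walk u v}
    (hp : p.IsPath) (hxp : x ∈ p.support) : x = u ∨ x = v := by
  induction p with
  | nil => simp_all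
  | cons hadj q ih =>
    obtain rfl | hxq := List.mem_cons.mp hxp
    · exact .inl rfl
    obtain rfl | rfl := ih hp.of_cons hxq
    · cases q with
      | nil => exact .inr rfl
      | cons hadj' q' =>
        -- the path would enter and leave `x` through two distinct neighbours
        have hne := (Walk.cons_isPath_iff _ _).mp hp |>.2
        rw [(degree_eq_one_iff_existsUnique_adj.mp hx).unique hadj.symm hadj'] at hne
        exact absurd (List.mem_cons_of_mem _ q'.start_mem_support) hne
    · exact .inr rfl

theorem IsPathCover.card_degree_eq_one_le_two_mul [Fintype V] {G : SimpleGraph V}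
    [DecidableRel G.Adj] {n : ℕ} {P : Fin n → Σ u v : V, G.Walk u v} (hP : IsPathCover G P) :
    #{v | G.degree v = 1} ≤ 2 * n := by
  classical
  have hsub : ({v | G.degree v = 1} : Finset V) ⊆
      univ.image (fun i => (P i).1) ∪ univ.image (fun i => (P i).2.1) := by
    intro x hx
    obtain ⟨i, hi⟩ := hP.2 x
    rcases (hP.1 i).eq_or_eq_of_degree_eq_one (mem_filter.mp hx).2 hi with h | h
    · exact mem_union_left _ (mem_image.mpr ⟨i, mem_univ _, h.symm⟩)
    · exact mem_union_right _ (mem_image.mpr ⟨i, mem_univ _, h.symm⟩)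
  calc _ ≤ _ := card_le_card hsub
    _ ≤ #(univ.image fun i => (P i).1) + #(univ.image fun i => (P i).2.1) := card_union_le _ _
    _ ≤ n + n := add_le_add (card_image_le.trans (by simp)) (card_image_le.trans (by simp))
    _ = 2 * n := (two_mul n).symm

namespace SimpleGraph.IsTree

variable {G : SimpleGraph V} (hG : G.IsTree)

noncomputable def path (u v : V) : G.Walk u v :=
  (hG.existsUnique_path u v).choose

theorem isPath_path (u v : V) : (hG.path u v).IsPath :=
  (hG.existsUnique_path u v).choose_spec.1

theorem eq_path {u v : V} {p : G.Walk u v} (hp : p.IsPath) : p = hG.path u v :=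
  (hG.existsUnique_path u v).choose_spec.2 p hp

theorem length_path (u v : V) : (hG.path u v).length = G.dist u v := by
  obtain ⟨p, hp, hlen⟩ := hG.connected.exists_path_of_dist u v
  rw [← hG.eq_path hp, hlen]

theorem support_path_self (u : V) : (hG.path u u).support = [u] := by
  rw [← hG.eq_path Walk.IsPath.nil, Walk.support_nil]

theorem mem_support_path_comm {u v w : V} :
    w ∈ (hG.path u v).support ↔ w ∈ (hG.path v u).support := by
  rw [← hG.eq_path (hG.isPath_path u v).reverse, Walk.support_reverse, List.mem_reverse]

theorem support_path_injective (r : V) : Function.Injective fun z => (hG.path r z).support := by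
  intro x y (h : (hG.path r x).support = (hG.path r y).support)
  rw [← (hG.path r x).getLast_support, ← (hG.path r y).getLast_support]
  simp only [h]

theorem mem_support_path_iff_prefix {r v w : V} :
    w ∈ (hG.path r v).support ↔ (hG.path r w).support <+: (hG.path r v).support := by
  classical
  refine ⟨fun h => ?_, fun h => h.subset (hG.path r w).end_mem_support⟩
  rw [← hG.eq_path ((hG.isPath_path r v).takeUntil h)]
  exact Walk.support_takeUntil_prefix_support _ h

theorem mem_support_path_of_notMem {r w x y : V} (hx : w ∈ (hG.path r x).support)
    (hy : w ∉ (hG.path r y).support) : w ∈ (hG.path y x).support := by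
  classical
  rw [← hG.eq_path ((hG.path r y).append (hG.path y x)).bypass_isPath] at hx
  exact (Walk.mem_support_append_iff _ _).mp (Walk.support_bypass_subset_support _ hx)
    |>.resolve_left hy

theorem exists_degree_eq_one_mem_support_path [Fintype V] [DecidableRel G.Adj] [Nontrivial V]
    (r v : V) : ∃ z, G.degree z = 1 ∧ v ∈ (hG.path r z).support := by
  classical
  set S := univ.filter fun z => v ∈ (hG.path r z).support
  obtain ⟨w, hwS, hwr⟩ : ∃ w ∈ S, w ≠ r := by
    by_cases hv : v = r
    · obtain ⟨w, hw⟩ := exists_ne r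
      exact ⟨w, by simp [S, hv], hw⟩
    · exact ⟨v, by simp [S], hv⟩
  obtain ⟨z, hzS, hzmax⟩ := S.exists_max_image (fun z => (hG.path r z).length) ⟨w, hwS⟩
  have hvz : v ∈ (hG.path r z).support := (mem_filter.mp hzS).2
  have hzr : z ≠ r := by
    rintro rfl
    have := hzmax w hwS
    simp only [← hG.eq_path Walk.IsPath.nil, Walk.length_nil, Nat.le_zero] at this
    exact hwr (Walk.eq_of_length_eq_zero this).symm
  have hnil : ¬ (hG.path r z).Nil := Walk.not_nil_of_ne hzr.symm
  refine ⟨z, degree_eq_one_iff_existsUnique_adj.mpr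
    ⟨_, (Walk.adj_penultimate hnil).symm, fun y hzy => ?_⟩, hvz⟩
  refine hG.isAcyclic.eq_penultimate_of_adj_end (hG.isPath_path r z) hzy ?_
  -- otherwise the path through `v` could be extended beyond `z`
  by_contra hy
  have hext := hG.eq_path ((hG.isPath_path r z).concat hy hzy)
  have := hzmax y (mem_filter.mpr ⟨mem_univ _,
    hext ▸ Walk.support_subset_support_concat _ _ hvz⟩)
  rw [← hext, Walk.length_concat] at this
  omega

theorem exists_mem_support_path_pairedIndex [LinearOrder V] {r v : V} {ℓ : ℕ} {e : ℕ → V}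
    (hmono : ∀ i j, i ≤ j → j < ℓ → (hG.path r (e i)).support ≤ (hG.path r (e j)).support)
    (hin : ∃ i < ℓ, v ∈ (hG.path r (e i)).support)
    (hout : ∃ i < ℓ, v ∉ (hG.path r (e i)).support) :
    ∃ j < (ℓ + 1) / 2, v ∈ (hG.path (e j) (e (pairedIndex ℓ j))).support := by
  classical
  set I := (range ℓ).filter fun i => v ∈ (hG.path r (e i)).support
  have hmemI : ∀ i, i ∈ I ↔ i < ℓ ∧ v ∈ (hG.path r (e i)).support := by simp [I]
  obtain ⟨i₀, hi₀, hvi₀⟩ := hin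
  have hI : I.Nonempty := ⟨i₀, (hmemI i₀).mpr ⟨hi₀, hvi₀⟩⟩
  set a := I.min' hI
  set b := I.max' hI
  have hb : b < ℓ := ((hmemI b).mp (I.max'_mem hI)).1
  have hprefix : ∀ k ∈ I, (hG.path r v).support <+: (hG.path r (e k)).support :=
    fun k hk => hG.mem_support_path_iff_prefix.mp ((hmemI k).mp hk).2
  have hIcc : ∀ i < ℓ, v ∈ (hG.path r (e i)).support ↔ a ≤ i ∧ i ≤ b := by
    refine fun i hi => ⟨fun h => ?_, fun ⟨h₁, h₂⟩ => ?_⟩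
    · have hiI := (hmemI i).mpr ⟨hi, h⟩
      exact ⟨I.min'_le i hiI, I.le_max' i hiI⟩
    · exact hG.mem_support_path_iff_prefix.mpr <|
        (hprefix a (I.min'_mem hI)).of_le_of_le (hprefix b (I.max'_mem hI))
          (hmono a i h₁ hi) (hmono i b h₂ hb)
  have hproper : 0 < a ∨ b + 1 < ℓ := by
    obtain ⟨i₁, hi₁, hvi₁⟩ := hout
    rw [hIcc i₁ hi₁] at hvi₁
    omega
  obtain ⟨j, hj, hsep⟩ := exists_pairedIndex_separating (I.min'_le_max' hI) hb hproper
  have hjℓ : j < ℓ := by omega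
  have hpℓ : pairedIndex ℓ j < ℓ := by unfold pairedIndex; omega
  rw [← hIcc j hjℓ, ← hIcc _ hpℓ] at hsep
  refine ⟨j, hj, ?_⟩
  by_cases hvj : v ∈ (hG.path r (e j)).support
  · exact hG.mem_support_path_comm.mp (hG.mem_support_path_of_notMem hvj (hsep.mp hvj))
  · exact hG.mem_support_path_of_notMem (not_not.mp (mt hsep.mpr hvj)) hvj

theorem exists_isometric_path_cover (hG : G.IsTree) [Fintype V] [DecidableRel G.Adj]
    [Nontrivial V] :
    ∃ P : Fin ((#{v | G.degree v = 1} + 1) / 2) → Σ u v : V, G.Walk u v,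
      IsPathCover G P ∧ ∀ i, IsIsometricWalk G (P i).2.2 := by
  classical
  let : LinearOrder V := LinearOrder.lift' _ (Fintype.equivFin V).injective
  obtain ⟨r, hr⟩ := hG.exists_vert_degree_one_of_nontrivial
  obtain ⟨e, he_surj, he_mono⟩ :=
    ({v | G.degree v = 1} : Finset V).exists_enum_monotone (hG.support_path_injective r)
  refine ⟨fun j => ⟨e j, e (pairedIndex #{v | G.degree v = 1} j), hG.path _ _⟩,
    ⟨fun _ => hG.isPath_path _ _, fun v => ?_⟩,
    fun _ => ⟨hG.isPath_path _ _, hG.length_path _ _⟩⟩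
  obtain ⟨i, hi, rfl⟩ := he_surj r (by simpa)
  by_cases hv : v = e i
  · subst hv
    obtain ⟨j, hj, rfl | h⟩ := exists_eq_or_eq_pairedIndex hi
    · exact ⟨⟨_, hj⟩, Walk.start_mem_support _⟩
    · exact ⟨⟨j, hj⟩, by rw [h]; exact Walk.end_mem_support _⟩
  · obtain ⟨z, hz, hvz⟩ := hG.exists_degree_eq_one_mem_support_path (e i) v
    obtain ⟨k, hk, rfl⟩ := he_surj z (by simpa)
    obtain ⟨j, hj, hvj⟩ := hG.exists_mem_support_path_pairedIndex he_mono ⟨k, hk, hvz⟩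
      ⟨i, hi, by simpa [support_path_self]⟩
    exact ⟨⟨j, hj⟩, hvj⟩

end SimpleGraph.IsTree

theorem stmt_9_general {V : Type*} [Fintype V] (G : SimpleGraph V)
    [DecidableRel G.Adj] (htree : G.IsTree) (hcard : 2 ≤ Fintype.card V)
    (ℓ : ℕ) (hℓ : ℓ = (Finset.univ.filter fun v : V => G.degree v = 1).card) :
    isometricPathCoverNum G = (ℓ + 1) / 2 := by
  subst hℓ
  have : Nontrivial V := Fintype.one_lt_card_iff_nontrivial.mp hcard
  obtain ⟨P, hP⟩ := htree.exists_isometric_path_cover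
  refine le_antisymm (Nat.sInf_le ⟨P, hP⟩) (le_csInf ⟨_, P, hP⟩ ?_)
  rintro n ⟨Q, hQ⟩
  have := hQ.1.card_degree_eq_one_le_two_mul
  omega

theorem stmt_9 {V : Type*} [Fintype V] [DecidableEq V] (G : SimpleGraph V)
    [DecidableRel G.Adj] (htree : G.IsTree) (hcard : 2 ≤ Fintype.card V)
    (ℓ : ℕ) (hℓ : ℓ = (Finset.univ.filter fun v : V => G.degree v = 1).card) :
    isometricPathCoverNum G = (ℓ + 1) / 2 :=
  stmt_9_general G htree hcard ℓ hℓ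
end

section
/- For every connected graph G with no isolated vertex, the total domination number satisfies γ_t(G) ≤ α'(G) + π_p(G), where α'(G) is the matching number and π_p(G) is the path partition number. -/
open SimpleGraph

variable {V : Type*}

/-- α' : the matching number, i.e. the maximum number of pairwise
vertex-disjoint edges. -/
noncomputable def matchingNum (G : SimpleGraph V) : ℕ :=
  sSup {n | ∃ s : Finset (Sym2 V), (↑s : Set (Sym2 V)) ⊆ G.edgeSet ∧ s.card = n ∧
    ∀ e ∈ s, ∀ f ∈ s, e ≠ f → ∀ x : V, ¬ (x ∈ e ∧ x ∈ f)}

/-- γ_t : the total domination number. -/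
noncomputable def totalDominationNum (G : SimpleGraph V) : ℕ :=
  sInf {n | ∃ s : Finset V, s.card = n ∧ ∀ v : V, ∃ u ∈ s, G.Adj v u}

/-!
Take a minimum path partition. A path on `m` vertices carries a matching of `⌊m/2⌋` of its own
edges, and (for `m ≥ 2`) the vertices at positions `≡ 1, 2 (mod 4)`, together with position
`m - 2` when `m ≡ 1, 2 (mod 4)`, totally dominate it using at most `⌊m/2⌋ + 1` vertices; a
one-vertex path is totally dominated by any neighbour of its vertex. Matchings of different
paths are vertex-disjoint, so their union is a matching, and the union of the dominating sets
totally dominates `G` with at most `α'(G) + π_p(G)` vertices.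
-/

open Finset

namespace SimpleGraph

variable {G : SimpleGraph V}

def IsEdgeMatching (G : SimpleGraph V) (s : Finset (Sym2 V)) : Prop :=
  (↑s : Set (Sym2 V)) ⊆ G.edgeSet ∧ ∀ e ∈ s, ∀ f ∈ s, e ≠ f → ∀ x : V, ¬ (x ∈ e ∧ x ∈ f)

def IsTotalDominatingSet (G : SimpleGraph V) (s : Finset V) : Prop :=
  ∀ v : V, ∃ u ∈ s, G.Adj v u

theorem totalDominationNum_le_card {s : Finset V} (hs : G.IsTotalDominatingSet s) :
    totalDominationNum G ≤ #s :=
  Nat.sInf_le ⟨s, rfl, hs⟩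

theorem IsEdgeMatching.card_le_matchingNum [Finite V] {s : Finset (Sym2 V)}
    (hs : G.IsEdgeMatching s) : #s ≤ matchingNum G := by
  have : Fintype (Sym2 V) := Fintype.ofFinite _
  refine le_csSup ⟨Fintype.card (Sym2 V), ?_⟩ ⟨s, hs.1, rfl, hs.2⟩
  rintro n ⟨t, -, rfl, -⟩
  exact card_le_univ t

theorem exists_isPathPartition_pathPartitionNum [Finite V] (G : SimpleGraph V) :
    ∃ P : Fin (pathPartitionNum G) → Σ u : V, Σ v : V, G.Walk u v, IsPathPartition G P := by
  refine Nat.sInf_mem (s := {n | ∃ P : Fin n → Σ u : V, Σ v : V, G.Walk u v,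
    IsPathPartition G P}) ?_
  let e := Finite.equivFin V
  refine ⟨Nat.card V, fun i => ⟨e.symm i, e.symm i, .nil⟩, fun _ => .nil, fun x => ⟨e x, ?_, ?_⟩⟩
  · simp
  · intro j hj
    simp [show x = e.symm j by simpa using hj]

section Union

variable [DecidableEq V] {ι : Type*} {M : ι → Finset (Sym2 V)}

theorem isEdgeMatching_biUnion (t : Finset ι) (hM : ∀ i ∈ t, G.IsEdgeMatching (M i))
    (hdisj : ∀ i j, ∀ e ∈ M i, ∀ f ∈ M j, ∀ x ∈ e, x ∈ f → i = j) :
    G.IsEdgeMatching (t.biUnion M) := by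
  refine ⟨fun e he => ?_, fun e he f hf hef x ⟨hxe, hxf⟩ => ?_⟩
  · obtain ⟨i, hi, hei⟩ := mem_biUnion.1 he
    exact (hM i hi).1 hei
  · obtain ⟨i, hi, hei⟩ := mem_biUnion.1 he
    obtain ⟨j, -, hfj⟩ := mem_biUnion.1 hf
    obtain rfl := hdisj i j e hei f hfj x hxe hxf
    exact (hM i hi).2 e hei f hfj hef x ⟨hxe, hxf⟩

theorem card_biUnion_of_vertexDisjoint (t : Finset ι)
    (hdisj : ∀ i j, ∀ e ∈ M i, ∀ f ∈ M j, ∀ x ∈ e, x ∈ f → i = j) :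
    #(t.biUnion M) = ∑ i ∈ t, #(M i) := by
  refine card_biUnion fun i _ j _ hij => ?_
  refine Finset.disjoint_left.2 fun e hei hej => hij ?_
  exact hdisj i j e hei e hej _ (Sym2.out_fst_mem e) (Sym2.out_fst_mem e)

end Union

def pathDominatingIndices (m : ℕ) : Finset ℕ :=
  (range m).filter (fun i => i % 4 = 1 ∨ i % 4 = 2) ∪
    (if m % 4 = 1 ∨ m % 4 = 2 then {m - 2} else ∅)

theorem exists_adj_mem_pathDominatingIndices {m : ℕ} (hm : 2 ≤ m) {i : ℕ} (hi : i < m) :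
    ∃ j ∈ pathDominatingIndices m, j < m ∧ (j = i + 1 ∨ i = j + 1) := by
  by_cases hsucc : i + 1 < m ∧ ((i + 1) % 4 = 1 ∨ (i + 1) % 4 = 2)
  · exact ⟨i + 1, mem_union_left _ (mem_filter.2 ⟨mem_range.2 hsucc.1, hsucc.2⟩), hsucc.1,
      Or.inl rfl⟩
  by_cases hpred : 1 ≤ i ∧ ((i - 1) % 4 = 1 ∨ (i - 1) % 4 = 2)
  · exact ⟨i - 1, mem_union_left _ (mem_filter.2 ⟨mem_range.2 (by omega), hpred.2⟩), by omega,
      Or.inr (by omega)⟩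
  have hm4 : m % 4 = 1 ∨ m % 4 = 2 := by omega
  exact ⟨m - 2, mem_union_right _ (by simp [hm4]), by omega, Or.inr (by omega)⟩

theorem card_filter_range_mod_four (m : ℕ) :
    #((range m).filter (fun i => i % 4 = 1 ∨ i % 4 = 2)) = (m + 2) / 4 + (m + 1) / 4 := by
  induction m with
  | zero => simp
  | succ n ih =>
    rw [range_add_one, filter_insert]
    split_ifs with h
    · rw [card_insert_of_notMem (by simp), ih]
      omega
    · rw [ih]
      omega

theorem card_pathDominatingIndices_le (m : ℕ) : #(pathDominatingIndices m) ≤ m / 2 + 1 := by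
  refine (card_union_le _ _).trans ?_
  rw [card_filter_range_mod_four]
  split_ifs with hm <;> simp only [card_singleton, card_empty] <;> omega

namespace Walk

variable {u v : V}

theorem exists_dominating_support_card_le [DecidableEq V] (p : G.Walk u v)
    (hu : ∃ w, G.Adj u w) :
    ∃ D : Finset V, #D ≤ (p.length + 1) / 2 + 1 ∧ ∀ x ∈ p.support, ∃ y ∈ D, G.Adj x y := by
  rcases Nat.eq_zero_or_pos p.length with hp | hp
  · obtain ⟨w, huw⟩ := hu
    refine ⟨{w}, by simp, fun x hx => ⟨w, mem_singleton_self w, ?_⟩⟩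
    obtain ⟨i, rfl, hi⟩ := mem_support_iff_exists_getVert.1 hx
    rwa [show i = 0 by omega, getVert_zero]
  refine ⟨(pathDominatingIndices (p.length + 1)).image p.getVert,
    card_image_le.trans (card_pathDominatingIndices_le _), fun x hx => ?_⟩
  obtain ⟨i, rfl, hi⟩ := mem_support_iff_exists_getVert.1 hx
  obtain ⟨j, hj, hjm, rfl | rfl⟩ :=
    exists_adj_mem_pathDominatingIndices (m := p.length + 1) (by omega) (Nat.lt_succ_of_le hi)
  · exact ⟨_, mem_image_of_mem _ hj, p.adj_getVert_succ (by omega)⟩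
  · exact ⟨_, mem_image_of_mem _ hj, (p.adj_getVert_succ (by omega)).symm⟩

def alternateEdges [DecidableEq V] (p : G.Walk u v) : Finset (Sym2 V) :=
  (range ((p.length + 1) / 2)).image fun j => s(p.getVert (2 * j), p.getVert (2 * j + 1))

variable [DecidableEq V]

theorem mem_support_of_mem_alternateEdges {p : G.Walk u v} {e : Sym2 V} {x : V}
    (he : e ∈ p.alternateEdges) (hx : x ∈ e) : x ∈ p.support := by
  obtain ⟨j, -, rfl⟩ := mem_image.1 he
  rcases Sym2.mem_iff.1 hx with rfl | rfl <;> exact p.getVert_mem_support _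

theorem IsPath.isEdgeMatching_alternateEdges {p : G.Walk u v} (hp : p.IsPath) :
    G.IsEdgeMatching p.alternateEdges := by
  refine ⟨fun e he => ?_, fun e he f hf hef x ⟨hxe, hxf⟩ => ?_⟩
  · obtain ⟨j, hj, rfl⟩ := mem_image.1 he
    exact p.adj_getVert_succ (by rw [mem_range] at hj; omega)
  obtain ⟨j, hj, rfl⟩ := mem_image.1 he
  obtain ⟨l, hl, rfl⟩ := mem_image.1 hf
  rw [mem_range] at hj hl
  have hjl : j ≠ l := by rintro rfl; exact hef rfl
  rcases Sym2.mem_iff.1 hxe with rfl | rfl <;> rcases Sym2.mem_iff.1 hxf with h | h <;>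
  · have := hp.getVert_injOn (by simp only [Set.mem_ofPred_eq]; omega)
      (by simp only [Set.mem_ofPred_eq]; omega) h
    omega

theorem IsPath.card_alternateEdges {p : G.Walk u v} (hp : p.IsPath) :
    #p.alternateEdges = (p.length + 1) / 2 := by
  rw [alternateEdges, card_image_of_injOn, card_range]
  intro a ha b hb hab
  simp only [coe_range, Set.mem_Iio] at ha hb
  have hinj : ∀ {i k}, i ≤ p.length → k ≤ p.length → p.getVert i = p.getVert k → i = k :=
    fun hi hk h => hp.getVert_injOn hi hk h
  rcases Sym2.eq_iff.1 hab with ⟨h, -⟩ | ⟨h, -⟩ <;> have := hinj (by omega) (by omega) h <;> omega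

end Walk

theorem totalDominationNum_le_matchingNum_add [Finite V] (hiso : ∀ v : V, ∃ u : V, G.Adj v u)
    {n : ℕ} {P : Fin n → Σ u : V, Σ v : V, G.Walk u v} (hP : IsPathPartition G P) :
    totalDominationNum G ≤ matchingNum G + n := by
  classical
  obtain ⟨hpath, hunique⟩ := hP
  choose D hDcard hD using fun i => (P i).2.2.exists_dominating_support_card_le (hiso (P i).1)
  let M i := (P i).2.2.alternateEdges
  have hdisj : ∀ i j, ∀ e ∈ M i, ∀ f ∈ M j, ∀ x ∈ e, x ∈ f → i = j :=
    fun i j _ he _ hf x hxe hxf => (hunique x).unique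
      (Walk.mem_support_of_mem_alternateEdges he hxe)
      (Walk.mem_support_of_mem_alternateEdges hf hxf)
  have hdom : G.IsTotalDominatingSet (univ.biUnion D) := fun x => by
    obtain ⟨i, hi, -⟩ := hunique x
    obtain ⟨y, hy, hxy⟩ := hD i x hi
    exact ⟨y, mem_biUnion.2 ⟨i, mem_univ i, hy⟩, hxy⟩
  calc totalDominationNum G ≤ #(univ.biUnion D) := totalDominationNum_le_card hdom
    _ ≤ ∑ i, #(D i) := card_biUnion_le
    _ ≤ ∑ i, (#(M i) + 1) := sum_le_sum fun i _ => (hpath i).card_alternateEdges ▸ hDcard i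
    _ = #(univ.biUnion M) + n := by
      rw [card_biUnion_of_vertexDisjoint _ hdisj, sum_add_distrib, sum_const, card_univ,
        Fintype.card_fin, smul_eq_mul, mul_one]
    _ ≤ matchingNum G + n := by
      gcongr
      exact (isEdgeMatching_biUnion _ (fun i _ => (hpath i).isEdgeMatching_alternateEdges)
        hdisj).card_le_matchingNum

end SimpleGraph

theorem stmt_16_general {V : Type*} [Fintype V] (G : SimpleGraph V)
    (hiso : ∀ v : V, ∃ u : V, G.Adj v u) :
    totalDominationNum G ≤ matchingNum G + pathPartitionNum G :=
  have ⟨_, hP⟩ := G.exists_isPathPartition_pathPartitionNum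
  G.totalDominationNum_le_matchingNum_add hiso hP

theorem stmt_16 {V : Type*} [Fintype V] (G : SimpleGraph V)
    (hconn : G.Connected) (hiso : ∀ v : V, ∃ u : V, G.Adj v u) :
    totalDominationNum G ≤ matchingNum G + pathPartitionNum G :=
  stmt_16_general G hiso
end

section
/- (Nordhaus–Gaddum lower bound) For every graph G on n vertices, ρ_p(G) + ρ_p(Ḡ) ≥ √n, where Ḡ is the complement of G and ρ_p denotes the induced path partition number. -/
open SimpleGraph

variable {V : Type*}

/-! An induced path `p` of `G` and an induced path `q` of `Gᶜ` share at most four vertices: every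
pair of common vertices is an edge of `G`, hence of `p`, or of `Gᶜ`, hence of `q`, while a path
has fewer edges than vertices inside any vertex set `M`, so `(|M| choose 2) ≤ 2 (|M| - 1)`.
Intersecting an optimal induced path partition of `G` (`a` paths) with one of `Gᶜ` (`b` paths)
therefore splits the `n` vertices into at most `a b` classes of size at most four, and
`n ≤ 4 a b ≤ (a + b)²`. -/

section InducedPaths

variable [DecidableEq V] {G : SimpleGraph V}

-- Under truncated subtraction this also covers walks avoiding `M`, which have no edge in `M.sym2`.
theorem SimpleGraph.Walk.countP_edges_mem_sym2_le {u v : V} (p : G.Walk u v) (M : Finset V) :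
    p.edges.countP (· ∈ M.sym2) ≤ p.support.countP (· ∈ M) - 1 := by
  induction p with
  | nil => simp
  | @cons u w _ _ q ih =>
    have hw : w ∈ M → 0 < q.support.countP (· ∈ M) := fun hwM =>
      List.countP_pos_iff.2 ⟨w, q.start_mem_support, by simpa using hwM⟩
    by_cases hu : u ∈ M <;> by_cases hwM : w ∈ M <;>
      simp only [Walk.edges_cons, Walk.support_cons, List.countP_cons, Finset.mk_mem_sym2_iff, hu,
        hwM, and_self, and_true, and_false, decide_true, decide_false, ↓reduceIte, true_implies,
        false_implies, Bool.false_eq_true] at hw ⊢ <;>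
      omega

theorem SimpleGraph.Walk.IsPath.card_edges_inside_le {u v : V} {p : G.Walk u v}
    (hp : p.IsPath) {M : Finset V} (hM : M ⊆ p.support.toFinset) :
    (p.edges.filter (· ∈ M.sym2)).toFinset.card ≤ M.card - 1 := by
  have hsupport : p.support.countP (· ∈ M) = M.card := by
    rw [List.countP_eq_length_filter, ← List.toFinset_card_of_nodup (hp.support_nodup.filter _)]
    congr 1
    ext x
    simpa using fun hx => List.mem_toFinset.1 (hM hx)
  calc (p.edges.filter (· ∈ M.sym2)).toFinset.card ≤ p.edges.countP (· ∈ M.sym2) := by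
        simpa [List.countP_eq_length_filter] using List.toFinset_card_le (p.edges.filter _)
    _ ≤ M.card - 1 := hsupport ▸ p.countP_edges_mem_sym2_le M

theorem IsInducedWalk.card_sym2_le {u v u' v' : V} {p : G.Walk u v} {q : Gᶜ.Walk u' v'}
    (hp : IsInducedWalk G p) (hq : IsInducedWalk Gᶜ q) {M : Finset V}
    (hMp : M ⊆ p.support.toFinset) (hMq : M ⊆ q.support.toFinset) :
    M.sym2.card ≤ M.card + 2 * (M.card - 1) := by
  have hP := hp.1.card_edges_inside_le hMp
  have hQ := hq.1.card_edges_inside_le hMq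
  set edgesP := (p.edges.filter (· ∈ M.sym2)).toFinset
  set edgesQ := (q.edges.filter (· ∈ M.sym2)).toFinset
  have hcover : M.sym2 ⊆ M.image Sym2.diag ∪ edgesP ∪ edgesQ := by
    intro e he
    induction e with
    | _ a b =>
      obtain ⟨ha, hb⟩ := Finset.mk_mem_sym2_iff.1 he
      by_cases hab : a = b
      · subst hab
        exact Finset.mem_union_left _ (Finset.mem_union_left _ (Finset.mem_image_of_mem _ ha))
      by_cases hadj : G.Adj a b
      · refine Finset.mem_union_left _ (Finset.mem_union_right _ ?_)
        simpa [edgesP, he] using hp.2 a (by simpa using hMp ha) b (by simpa using hMp hb) hadj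
      · refine Finset.mem_union_right _ ?_
        have hab' : Gᶜ.Adj a b := ⟨hab, hadj⟩
        simpa [edgesQ, he] using hq.2 a (by simpa using hMq ha) b (by simpa using hMq hb) hab'
  have hdiag := Finset.card_image_le (s := M) (f := Sym2.diag)
  calc M.sym2.card ≤ (M.image Sym2.diag ∪ edgesP ∪ edgesQ).card := Finset.card_le_card hcover
    _ ≤ (M.image Sym2.diag).card + edgesP.card + edgesQ.card :=
        (Finset.card_union_le _ _).trans (Nat.add_le_add_right (Finset.card_union_le _ _) _)
    _ ≤ M.card + 2 * (M.card - 1) := by omega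

theorem IsInducedWalk.card_inter_compl_le_four {u v u' v' : V} {p : G.Walk u v}
    {q : Gᶜ.Walk u' v'} (hp : IsInducedWalk G p) (hq : IsInducedWalk Gᶜ q) :
    (p.support.toFinset ∩ q.support.toFinset).card ≤ 4 := by
  by_contra! h
  obtain ⟨M, hM, hM5⟩ := Finset.exists_subset_card_eq h
  have := hp.card_sym2_le hq (hM.trans Finset.inter_subset_left)
    (hM.trans Finset.inter_subset_right)
  rw [Finset.card_sym2, hM5] at this
  exact absurd this (by decide)

end InducedPaths

theorem IsPathPartition.isPathCover_s18 {G : SimpleGraph V} {n : ℕ}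
    {P : Fin n → Σ u : V, Σ v : V, G.Walk u v} (hP : IsPathPartition G P) : IsPathCover G P :=
  ⟨hP.1, fun x => (hP.2 x).exists⟩

theorem card_le_four_mul_of_isPathCover [Fintype V] {G : SimpleGraph V} {a b : ℕ}
    {P : Fin a → Σ u : V, Σ v : V, G.Walk u v} {Q : Fin b → Σ u : V, Σ v : V, Gᶜ.Walk u v}
    (hP : IsPathCover G P) (hPi : ∀ i, IsInducedWalk G (P i).2.2)
    (hQ : IsPathCover Gᶜ Q) (hQi : ∀ j, IsInducedWalk Gᶜ (Q j).2.2) :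
    Fintype.card V ≤ 4 * (a * b) := by
  classical
  choose f hf using hP.2
  choose g hg using hQ.2
  have hfiber : ∀ c ∈ (Finset.univ : Finset (Fin a × Fin b)),
      (Finset.univ.filter fun x => (f x, g x) = c).card ≤ 4 := by
    rintro ⟨i, j⟩ -
    refine le_trans (Finset.card_le_card fun x hx => ?_) ((hPi i).card_inter_compl_le_four (hQi j))
    obtain ⟨rfl, rfl⟩ := Prod.ext_iff.1 (Finset.mem_filter.1 hx).2
    simpa using ⟨hf x, hg x⟩
  simpa using Finset.card_le_mul_card_image_of_maps_to (fun x _ => Finset.mem_univ (f x, g x))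
    4 hfiber

theorem exists_inducedPathPartition [Fintype V] (G : SimpleGraph V) :
    ∃ P : Fin (inducedPathPartitionNum G) → Σ u : V, Σ v : V, G.Walk u v,
      IsPathPartition G P ∧ ∀ i, IsInducedWalk G (P i).2.2 := by
  let e := (Fintype.equivFin V).symm
  refine Nat.sInf_mem (s := {n | ∃ P : Fin n → Σ u : V, Σ v : V, G.Walk u v,
    IsPathPartition G P ∧ ∀ i, IsInducedWalk G (P i).2.2})
    ⟨Fintype.card V, fun i => ⟨e i, e i, .nil⟩, ⟨fun _ => .nil, fun x => ?_⟩,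
      fun _ => ⟨.nil, ?_⟩⟩
  · exact ⟨e.symm x, by simp, fun j hj => by simp_all⟩
  · simp

theorem stmt_18 {V : Type*} [Fintype V] (G : SimpleGraph V) :
    Real.sqrt (Fintype.card V) ≤
      ((inducedPathPartitionNum G + inducedPathPartitionNum Gᶜ : ℕ) : ℝ) := by
  obtain ⟨P, hP, hPi⟩ := exists_inducedPathPartition G
  obtain ⟨Q, hQ, hQi⟩ := exists_inducedPathPartition Gᶜ
  have hcard := card_le_four_mul_of_isPathCover hP.isPathCover_s18 hPi hQ.isPathCover_s18 hQi
  set a := inducedPathPartitionNum G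
  set b := inducedPathPartitionNum Gᶜ
  rw [Real.sqrt_le_iff]
  refine ⟨by positivity, ?_⟩
  have : (Fintype.card V : ℝ) ≤ 4 * (a * b) := by exact_mod_cast hcard
  push_cast
  nlinarith [sq_nonneg ((a : ℝ) - b)]
end

section
/- For every graph G, the induced path partition number is at most the zero forcing number: ρ_p(G) ≤ z(G). -/
open SimpleGraph

variable {V : Type*}

/-- Zero forcing: starting from a blue set `B`, a blue vertex `u` whose only
non-blue neighbor is `v` forces `v` to become blue. `Forced G B v` means `v`
eventually becomes blue. -/
inductive Forced (G : SimpleGraph V) (B : Set V) : V → Prop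
  | init : ∀ v, v ∈ B → Forced G B v
  | force : ∀ u v, Forced G B u → G.Adj u v →
      (∀ w, G.Adj u w → w ≠ v → Forced G B w) → Forced G B v

/-- z : the zero forcing number. -/
noncomputable def zeroForcingNum (G : SimpleGraph V) : ℕ :=
  sInf {n | ∃ B : Finset V, B.card = n ∧ ∀ v : V, Forced G (↑B : Set V) v}

/-!
Run the forcing process in some chronological order. When `u` forces `v`, every neighbour of `u`
other than `v` is already blue, so `u` never forces again and `v` is adjacent to no earlier
vertex of `u`'s forcing chain except `u`. Hence the forcing chains grow by one vertex at a time
as induced paths, and at the end they partition the vertex set into `|B|` induced paths.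
-/

namespace SimpleGraph

variable {G : SimpleGraph V}

lemma Forced.exists_force_of_notMem {B S : Set V} (hBS : B ⊆ S) {x : V} (hx : Forced G B x)
    (hxS : x ∉ S) :
    ∃ u v, u ∈ S ∧ v ∉ S ∧ G.Adj u v ∧ ∀ w, G.Adj u w → w ≠ v → w ∈ S := by
  induction hx with
  | init x hxB => exact absurd (hBS hxB) hxS
  | force u v _ huv _ ihu ihw =>
    by_cases huS : u ∈ S
    · by_cases hw : ∀ w, G.Adj u w → w ≠ v → w ∈ S
      · exact ⟨u, v, huS, hxS, huv, hw⟩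
      · push Not at hw
        obtain ⟨w, huw, hwv, hwS⟩ := hw
        exact ihw w huw hwv hwS
    · exact ihu huS

end SimpleGraph

open SimpleGraph

lemma IsInducedWalk.concat {G : SimpleGraph V} {a u v : V} {p : G.Walk a u}
    (hp : IsInducedWalk G p) (huv : G.Adj u v) (hv : v ∉ p.support)
    (hnv : ∀ x ∈ p.support, G.Adj x v → x = u) : IsInducedWalk G (p.concat huv) := by
  refine ⟨hp.1.concat hv huv, fun x hx y hy hxy => ?_⟩
  rw [Walk.support_concat, List.mem_append, List.mem_singleton] at hx hy
  rw [Walk.edges_concat, List.concat_eq_append, List.mem_append, List.mem_singleton]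
  rcases hx with hx | rfl <;> rcases hy with hy | rfl
  · exact Or.inl (hp.2 x hx y hy hxy)
  · exact Or.inr (by rw [hnv x hx hxy])
  · exact Or.inr (by rw [Sym2.eq_swap, hnv y hy hxy.symm])
  · exact absurd rfl hxy.ne

/-- The forcing chains of a partial zero forcing process whose blue set is `S`. -/
structure ForcingChains {ι : Type*} (G : SimpleGraph V) (S : Set V)
    (P : ι → Σ u : V, Σ v : V, G.Walk u v) : Prop where
  induced : ∀ i, IsInducedWalk G (P i).2.2
  support_subset : ∀ i, ∀ x ∈ (P i).2.2.support, x ∈ S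
  existsUnique : ∀ x ∈ S, ∃! i, x ∈ (P i).2.2.support
  adj_mem : ∀ i, ∀ x ∈ (P i).2.2.support, x ≠ (P i).2.1 → ∀ w, G.Adj x w → w ∈ S

namespace ForcingChains

variable {G : SimpleGraph V}

lemma of_finset (B : Finset V) :
    ForcingChains G ↑B fun i : Fin B.card => ⟨B.equivFin.symm i, _, Walk.nil⟩ where
  induced _ := ⟨Walk.IsPath.nil, by simp⟩
  support_subset i x hx := by simp_all
  existsUnique x hx := ⟨B.equivFin ⟨x, hx⟩, by simp, fun i hi => by simp_all⟩
  adj_mem i x hx hne := by simp_all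

lemma update_concat {ι : Type*} {S : Set V} {P P' : ι → Σ u : V, Σ v : V, G.Walk u v}
    (hP : ForcingChains G S P) {i : ι} {v : V} (hv : v ∉ S) (hadj : G.Adj (P i).2.1 v)
    (hS : ∀ w, G.Adj (P i).2.1 w → w ≠ v → w ∈ S)
    (hP'i : P' i = ⟨(P i).1, v, (P i).2.2.concat hadj⟩) (hP'j : ∀ j ≠ i, P' j = P j) :
    ForcingChains G (insert v S) P' := by
  have hsupp : ∀ j x, x ∈ (P' j).2.2.support ↔ x ∈ (P j).2.2.support ∨ j = i ∧ x = v := by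
    intro j x
    rcases eq_or_ne j i with rfl | hji
    · rw [hP'i, Walk.support_concat]
      simp
    · rw [hP'j j hji]
      simp [hji]
  refine ⟨fun j => ?_, fun j x hx => ?_, fun x hx => ?_, fun j x hx hxe w hxw => ?_⟩
  · rcases eq_or_ne j i with rfl | hji
    · rw [hP'i]
      refine (hP.induced j).concat hadj (fun h => hv (hP.support_subset j v h)) fun x hx hxv => ?_
      by_contra hne
      exact hv (hP.adj_mem j x hx hne v hxv)
    · rw [hP'j j hji]
      exact hP.induced j
  · rcases (hsupp j x).1 hx with hx | ⟨-, rfl⟩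
    · exact Set.mem_insert_of_mem _ (hP.support_subset j x hx)
    · exact Set.mem_insert x S
  · rcases eq_or_ne x v with rfl | hxv
    · refine ⟨i, (hsupp i x).2 (Or.inr ⟨rfl, rfl⟩), fun j hj => ?_⟩
      rcases (hsupp j x).1 hj with hj | ⟨rfl, -⟩
      · exact absurd (hP.support_subset j x hj) hv
      · rfl
    · obtain ⟨j, hj, hj_unique⟩ := hP.existsUnique x (Set.mem_of_mem_insert_of_ne hx hxv)
      refine ⟨j, (hsupp j x).2 (Or.inl hj), fun k hk => hj_unique k ?_⟩
      simpa [hxv] using (hsupp k x).1 hk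
  · rcases eq_or_ne j i with rfl | hji
    · have hxv : x ≠ v := by rwa [hP'i] at hxe
      have hx : x ∈ (P j).2.2.support := by simpa [hxv] using (hsupp j x).1 hx
      rcases eq_or_ne x (P j).2.1 with rfl | hxe'
      · rcases eq_or_ne w v with rfl | hwv
        · exact Set.mem_insert w S
        · exact Set.mem_insert_of_mem _ (hS w hxw hwv)
      · exact Set.mem_insert_of_mem _ (hP.adj_mem j x hx hxe' w hxw)
    · rw [hP'j j hji] at hx hxe
      exact Set.mem_insert_of_mem _ (hP.adj_mem j x hx hxe w hxw)

lemma force {ι : Type*} {S : Set V} {P : ι → Σ u : V, Σ v : V, G.Walk u v}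
    (hP : ForcingChains G S P) {u v : V} (hu : u ∈ S) (hv : v ∉ S) (huv : G.Adj u v)
    (hS : ∀ w, G.Adj u w → w ≠ v → w ∈ S) :
    ∃ P' : ι → Σ u : V, Σ v : V, G.Walk u v, ForcingChains G (insert v S) P' := by
  classical
  obtain ⟨i, hui, -⟩ := hP.existsUnique u hu
  obtain rfl : (P i).2.1 = u := by
    by_contra hne
    exact hv (hP.adj_mem i u hui (Ne.symm hne) v huv)
  exact ⟨Function.update P i ⟨(P i).1, v, (P i).2.2.concat huv⟩,
    hP.update_concat hv huv hS (Function.update_self ..) fun j hji => Function.update_of_ne hji ..⟩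

lemma exists_univ [Fintype V] [DecidableEq V] {ι : Type*} {B S : Finset V}
    (hB : ∀ x, Forced G ↑B x) (hBS : B ⊆ S) {P : ι → Σ u : V, Σ v : V, G.Walk u v}
    (hP : ForcingChains G ↑S P) :
    ∃ P' : ι → Σ u : V, Σ v : V, G.Walk u v, ForcingChains G Set.univ P' := by
  by_cases hS : S = Finset.univ
  · subst hS
    exact ⟨P, by simpa using hP⟩
  obtain ⟨x, -, hxS⟩ := Finset.exists_of_ssubset (Finset.ssubset_univ_iff.2 hS)
  obtain ⟨u, v, hu, hv, huv, hw⟩ :=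
    (hB x).exists_force_of_notMem (Finset.coe_subset.2 hBS) (Finset.mem_coe.not.2 hxS)
  obtain ⟨P', hP'⟩ := hP.force hu hv huv hw
  have : (insert v S).card = S.card + 1 := Finset.card_insert_of_notMem (Finset.mem_coe.not.1 hv)
  have := (insert v S).card_le_univ
  exact exists_univ hB (hBS.trans (Finset.subset_insert v S)) (by simpa using hP')
termination_by Fintype.card V - S.card

end ForcingChains

lemma inducedPathPartitionNum_le_card_of_forced [Fintype V] {G : SimpleGraph V} {B : Finset V}
    (hB : ∀ x, Forced G ↑B x) : inducedPathPartitionNum G ≤ B.card := by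
  classical
  obtain ⟨P, hP⟩ := (ForcingChains.of_finset B).exists_univ hB le_rfl
  exact Nat.sInf_le ⟨P, ⟨fun i => (hP.induced i).1, fun x => hP.existsUnique x trivial⟩,
    hP.induced⟩

theorem stmt_19 {V : Type*} [Fintype V] (G : SimpleGraph V) :
    inducedPathPartitionNum G ≤ zeroForcingNum G := by
  obtain ⟨B, hcard, hB⟩ := Nat.sInf_mem (s := {n | ∃ B : Finset V, B.card = n ∧
    ∀ x, Forced G (↑B : Set V) x}) ⟨_, Finset.univ, rfl, fun x => .init x (by simp)⟩
  rw [zeroForcingNum, ← hcard]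
  exact inducedPathPartitionNum_le_card_of_forced hB
end
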